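/- For any countable abelian group G and any Følner sequence Φ in G with [G:2G] = ℓ < ∞ and |ker(D)| = r < ∞, the doubling ratio satisfies α_Φ ≤ min{1, r/ℓ}. Consequently the group doubling ratio α_G = sup over Følner sequences of α_Φ satisfies α_G ≤ min{1, r/ℓ}. -/

import Mathlib

open Filter Pointwise
open scoped Classical

/-- The doubling map `g ↦ g + g` as an additive homomorphism. -/
def doubleHom (G : Type*) [AddCommGroup G] : G →+ G where
  toFun g := g + g
  map_zero' := by simp
  map_add' := by intro a b; abel

/-- The subgroup `2G = {g + g : g ∈ G}`. -/
def twoG (G : Type*) [AddCommGroup G] : AddSubgroup G := (doubleHom G).range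

/-- A Følner sequence: finite sets with `|Φ_N ∩ (g + Φ_N)|/|Φ_N| → 1` for every `g`. -/
def IsFolner {G : Type*} [AddCommGroup G] (Φ : ℕ → Finset G) : Prop :=
  ∀ g : G, Tendsto
    (fun N => (((Φ N) ∩ (Φ N).image (fun x => g + x)).card : ℝ) / ((Φ N).card : ℝ))
    atTop (nhds 1)

/-- The doubling ratio of a Følner sequence:
`α_Φ = liminf |Φ_N/2 ∩ Φ_N| / |Φ_N|`. -/
noncomputable def dratio {G : Type*} [AddCommGroup G] (Φ : ℕ → Finset G) : ℝ :=
  Filter.liminf (fun N =>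
    (((((fun x : G => x + x) ⁻¹' (Φ N : Set G)) ∩ (Φ N : Set G)).ncard : ℝ) /
      ((Φ N).card : ℝ))) atTop

/-!
Write `A = Φ_N`. The doubling map is `r`-to-one, and it sends `{x ∈ A | 2x ∈ A}` into `A ∩ 2G`,
so `|Φ_N/2 ∩ Φ_N| ≤ r |A ∩ 2G|`. Translating `A ∩ 2G` by a representative `g` of a coset `q`
of `2G` lands in `A ∩ q` except for the part outside `A`, which is `o(|A|)` by the Følner
property; summing over the `ℓ` cosets gives `ℓ |A ∩ 2G| ≤ (1 + o(1)) |A|`.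
-/

section Folner

variable {G : Type*} [AddCommGroup G]

theorem AddMonoidHom.card_le_card_ker_mul_card_image {H : Type*} [AddGroup H] (f : G →+ H)
    [Finite f.ker] (s : Finset G) : s.card ≤ Nat.card f.ker * (s.image f).card := by
  refine Finset.card_le_mul_card_image s _ fun b hb => ?_
  obtain ⟨x₀, -, rfl⟩ := Finset.mem_image.1 hb
  rw [← Nat.card_eq_finsetCard]
  refine Nat.card_le_card_of_injective
    (fun x => ⟨x - x₀, by simp [AddMonoidHom.mem_ker, (Finset.mem_filter.1 x.2).2]⟩) ?_
  intro x y hxy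
  exact Subtype.ext (sub_left_injective (congrArg Subtype.val hxy))

theorem AddSubgroup.card_filter_mem_le (H : AddSubgroup G) (A : Finset G) (g : G) :
    (A.filter (· ∈ H)).card ≤
      (A.filter fun x : G => (x : G ⧸ H) = g).card + (A.image (g + ·) \ A).card := by
  calc (A.filter (· ∈ H)).card = ((A.filter (· ∈ H)).image (g + ·)).card :=
        (Finset.card_image_of_injective _ (add_right_injective g)).symm
    _ ≤ (A.filter (fun x : G => (x : G ⧸ H) = g) ∪ A.image (g + ·) \ A).card := by
        refine Finset.card_le_card fun y hy => ?_
        obtain ⟨x, hx, rfl⟩ := Finset.mem_image.1 hy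
        rw [Finset.mem_filter] at hx
        by_cases hgx : g + x ∈ A
        · refine Finset.mem_union_left _ (Finset.mem_filter.2 ⟨hgx, ?_⟩)
          rw [QuotientAddGroup.mk_add, (QuotientAddGroup.eq_zero_iff x).2 hx.2, add_zero]
        · exact Finset.mem_union_right _
            (Finset.mem_sdiff.2 ⟨Finset.mem_image_of_mem _ hx.1, hgx⟩)
    _ ≤ _ := Finset.card_union_le _ _

theorem AddSubgroup.index_mul_card_filter_mem_le (H : AddSubgroup G) [Fintype (G ⧸ H)]
    (A : Finset G) :
    H.index * (A.filter (· ∈ H)).card ≤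
      A.card + ∑ q : G ⧸ H, (A.image (q.out + ·) \ A).card := by
  calc H.index * (A.filter (· ∈ H)).card = ∑ _q : G ⧸ H, (A.filter (· ∈ H)).card := by
        rw [Finset.sum_const, Finset.card_univ, smul_eq_mul, AddSubgroup.index_eq_card,
          Nat.card_eq_fintype_card]
    _ ≤ ∑ q : G ⧸ H, ((A.filter fun x : G => (x : G ⧸ H) = q).card +
          (A.image (q.out + ·) \ A).card) :=
        Finset.sum_le_sum fun q _ => by simpa using H.card_filter_mem_le A q.out
    _ = _ := by
        rw [Finset.sum_add_distrib, ← Finset.card_eq_sum_card_fiberwise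
          fun _ _ => Finset.mem_univ _]

namespace IsFolner

variable {Φ : ℕ → Finset G}

theorem eventually_card_pos (hΦ : IsFolner Φ) : ∀ᶠ N in atTop, 0 < (Φ N).card := by
  filter_upwards [(hΦ 0).eventually (eventually_ne_nhds one_ne_zero)] with N hN
  refine Nat.pos_of_ne_zero fun h => hN ?_
  simp [h]

theorem eventually_card_image_add_sdiff_le (hΦ : IsFolner Φ) (g : G) {δ : ℝ} (hδ : 0 < δ) :
    ∀ᶠ N in atTop, ((((Φ N).image (g + ·)) \ Φ N).card : ℝ) ≤ δ * (Φ N).card := by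
  filter_upwards [(hΦ g).eventually (eventually_gt_nhds (sub_lt_self 1 hδ)),
    hΦ.eventually_card_pos] with N hN hpos
  have hcard : ((Φ N).image (g + ·)).card = (Φ N).card :=
    Finset.card_image_of_injective _ (add_right_injective g)
  have hsub : ((((Φ N).image (g + ·)) \ Φ N).card : ℝ) +
      (Φ N ∩ (Φ N).image (g + ·)).card = (Φ N).card := by
    rw [Finset.inter_comm]
    exact_mod_cast (Finset.card_sdiff_add_card_inter _ _).trans hcard
  rw [lt_div_iff₀ (by exact_mod_cast hpos)] at hN
  linarith

theorem eventually_card_filter_mem_le (hΦ : IsFolner Φ) (H : AddSubgroup G) [H.FiniteIndex]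
    {δ : ℝ} (hδ : 0 < δ) :
    ∀ᶠ N in atTop, (((Φ N).filter (· ∈ H)).card : ℝ) ≤ ((H.index : ℝ)⁻¹ + δ) * (Φ N).card := by
  have := Fintype.ofFinite (G ⧸ H)
  filter_upwards [eventually_all.2 fun q : G ⧸ H =>
    hΦ.eventually_card_image_add_sdiff_le q.out hδ] with N hN
  have hindex : (0 : ℝ) < H.index := by
    exact_mod_cast Nat.pos_of_ne_zero AddSubgroup.FiniteIndex.index_ne_zero
  have hsum := H.index_mul_card_filter_mem_le (Φ N)
  have hcast : (H.index : ℝ) = Fintype.card (G ⧸ H) := by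
    rw [AddSubgroup.index_eq_card, Nat.card_eq_fintype_card]
  have hbound : (H.index : ℝ) * ((Φ N).filter (· ∈ H)).card ≤
      (Φ N).card + H.index * (δ * (Φ N).card) := by
    calc (H.index : ℝ) * ((Φ N).filter (· ∈ H)).card
        ≤ (Φ N).card + ∑ q : G ⧸ H, (((Φ N).image (q.out + ·) \ Φ N).card : ℝ) := by
          exact_mod_cast hsum
      _ ≤ (Φ N).card + ∑ _q : G ⧸ H, δ * (Φ N).card := by gcongr with q; exact hN q
      _ = _ := by rw [Finset.sum_const, Finset.card_univ, nsmul_eq_mul, hcast]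
  rw [add_mul, inv_mul_eq_div, ← sub_le_iff_le_add, le_div_iff₀' hindex]
  linarith

end IsFolner

theorem ncard_preimage_double_inter (A : Finset G) :
    (((fun x : G => x + x) ⁻¹' (A : Set G)) ∩ (A : Set G)).ncard =
      (A.filter (fun x => x + x ∈ A)).card := by
  rw [← Set.ncard_coe_finset, Finset.coe_filter]
  congr 1
  ext x
  simp [and_comm]

theorem dratio_le_of_forall_eventually_le {Φ : ℕ → Finset G} {c : ℝ} (hc : 0 ≤ c)
    (h : ∀ ε > 0, ∀ᶠ N in atTop,
      (((Φ N).filter (fun x => x + x ∈ Φ N)).card : ℝ) ≤ (c + ε) * (Φ N).card) :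
    dratio Φ ≤ c := by
  refine le_of_forall_pos_le_add fun ε hε => ?_
  refine liminf_le_of_frequently_le (h ε hε |>.mono fun N hN => ?_).frequently
    (isBoundedUnder_of ⟨0, fun N => by positivity⟩)
  rw [ncard_preimage_double_inter]
  rcases Nat.eq_zero_or_pos (Φ N).card with h0 | hpos
  · rw [h0, Nat.cast_zero, div_zero]; positivity
  · rwa [div_le_iff₀ (by exact_mod_cast hpos)]

theorem dratio_le_one (Φ : ℕ → Finset G) : dratio Φ ≤ 1 :=
  dratio_le_of_forall_eventually_le zero_le_one fun ε hε => .of_forall fun N => by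
    have hle : (((Φ N).filter (fun x => x + x ∈ Φ N)).card : ℝ) ≤ (Φ N).card := by
      exact_mod_cast Finset.card_filter_le _ _
    nlinarith [mul_nonneg hε.le (Nat.cast_nonneg (α := ℝ) (Φ N).card)]

theorem IsFolner.dratio_le_card_ker_div_index {Φ : ℕ → Finset G} (hΦ : IsFolner Φ)
    [(twoG G).FiniteIndex] [Finite (doubleHom G).ker] :
    dratio Φ ≤ (Nat.card (doubleHom G).ker : ℝ) / (twoG G).index := by
  set r := Nat.card (doubleHom G).ker
  have hr : (0 : ℝ) < r := by exact_mod_cast Nat.card_pos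
  refine dratio_le_of_forall_eventually_le (by positivity) fun ε hε => ?_
  filter_upwards [hΦ.eventually_card_filter_mem_le (twoG G) (div_pos hε hr)] with N hN
  set A := Φ N
  have himage : (A.filter (fun x => x + x ∈ A)).image (doubleHom G) ⊆ A.filter (· ∈ twoG G) := by
    intro y hy
    obtain ⟨x, hx, rfl⟩ := Finset.mem_image.1 hy
    exact Finset.mem_filter.2 ⟨(Finset.mem_filter.1 hx).2, x, rfl⟩
  calc ((A.filter (fun x => x + x ∈ A)).card : ℝ)
      ≤ r * ((A.filter (fun x => x + x ∈ A)).image (doubleHom G)).card := by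
        exact_mod_cast (doubleHom G).card_le_card_ker_mul_card_image _
    _ ≤ r * (A.filter (· ∈ twoG G)).card := by gcongr
    _ ≤ r * (((twoG G).index : ℝ)⁻¹ + ε / r) * A.card := by rw [mul_assoc]; gcongr
    _ = (r / (twoG G).index + ε) * A.card := by field_simp

end Folner

theorem stmt12_general (G : Type*) [AddCommGroup G] (ℓ r : ℕ)
    (hℓ : 0 < ℓ) (hr : 0 < r)
    (hindex : (twoG G).index = ℓ) (hker : Nat.card (doubleHom G).ker = r) :
    (∀ Φ : ℕ → Finset G, IsFolner Φ → dratio Φ ≤ min 1 ((r : ℝ) / (ℓ : ℝ))) ∧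
    sSup {α : ℝ | ∃ Φ : ℕ → Finset G, IsFolner Φ ∧ α = dratio Φ} ≤
      min 1 ((r : ℝ) / (ℓ : ℝ)) := by
  have : (twoG G).FiniteIndex := ⟨by omega⟩
  have : Finite (doubleHom G).ker := Nat.finite_of_card_ne_zero (by omega)
  have hbound : ∀ Φ : ℕ → Finset G, IsFolner Φ → dratio Φ ≤ min 1 ((r : ℝ) / (ℓ : ℝ)) :=
    fun Φ hΦ => le_min (dratio_le_one Φ) (hindex ▸ hker ▸ hΦ.dratio_le_card_ker_div_index)
  refine ⟨hbound, Real.sSup_le ?_ (by positivity)⟩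
  rintro _ ⟨Φ, hΦ, rfl⟩
  exact hbound Φ hΦ

theorem stmt12 (G : Type*) [AddCommGroup G] [Countable G] (ℓ r : ℕ)
    (hℓ : 0 < ℓ) (hr : 0 < r)
    (hindex : (twoG G).index = ℓ) (hker : Nat.card (doubleHom G).ker = r) :
    (∀ Φ : ℕ → Finset G, IsFolner Φ → dratio Φ ≤ min 1 ((r : ℝ) / (ℓ : ℝ))) ∧
    sSup {α : ℝ | ∃ Φ : ℕ → Finset G, IsFolner Φ ∧ α = dratio Φ} ≤
      min 1 ((r : ℝ) / (ℓ : ℝ)) :=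
  stmt12_general G ℓ r hℓ hr hindex hker
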